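/- For even q there is a group isomorphism SO_{2m+1}(q) → Sp_{2m}(q) given by mapping each matrix A to the matrix obtained from A by removing the middle row and the middle column. -/

import Mathlib

open Matrix

/-- The quadratic form `Q_{2m+1}(v) = v_0^2 + ∑_{j=1}^m v_j v_j'` on `F^(2m+1)`,
with coordinates ordered `(v_m, …, v_1, v_0, v_1', …, v_m')`. -/
def Qodd (F : Type*) [Field F] (m : ℕ) (v : Fin (2 * m + 1) → F) : F :=
  v ⟨m, by omega⟩ ^ 2 +
    ∑ j : Fin m, v (Fin.castLE (by omega) j) * v ⟨2 * m - (j : ℕ), by omega⟩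

/-- The embedding `Fin (2m) → Fin (2m+1)` skipping the middle index `m`. -/
def skipMid (m : ℕ) (i : Fin (2 * m)) : Fin (2 * m + 1) :=
  if h : (i : ℕ) < m then ⟨i, by omega⟩ else ⟨(i : ℕ) + 1, by have := i.isLt; omega⟩

/-- Removing the middle row and the middle column of a `(2m+1) × (2m+1)` matrix. -/
def removeMid {F : Type*} [Field F] (m : ℕ)
    (A : Matrix (Fin (2 * m + 1)) (Fin (2 * m + 1)) F) :
    Matrix (Fin (2 * m)) (Fin (2 * m)) F :=
  Matrix.of fun i j => A (skipMid m i) (skipMid m j)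

/-- The anti-diagonal matrix `J_{2m}`. -/
def Jsymp (F : Type*) [Field F] (m : ℕ) : Matrix (Fin (2 * m)) (Fin (2 * m)) F :=
  fun i j => if (i : ℕ) + (j : ℕ) = 2 * m - 1 then 1 else 0

/-! In characteristic 2 the polar form of `Q_{2m+1}` is `(u, v) ↦ u' ⬝ J v'`, where `u'` forgets
the middle coordinate, so its radical is the line through the middle basis vector `e_0`. An
isometry preserves the radical and `Q(e_0) = 1`; as squaring is injective, it fixes `e_0`. Hence its
middle column is `e_0`, deleting the middle row and column is multiplicative, and the remaining
block preserves `J`. The middle row is forced: `Q(A e_k) = Q(e_k) = 0` determines `A_{0k}²`.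
Conversely a symplectic `B` extends to an isometry by taking these square roots as the middle row
(Frobenius is bijective on a finite field of characteristic 2), since a quadratic form is determined
by its polar form and its values on a basis; and `det B = 1` because `(det B)² = 1`. -/

theorem QuadraticMap.ext_basis {ι R M N : Type*} [CommRing R] [AddCommGroup M] [Module R M]
    [AddCommGroup N] [Module R N] [DecidableEq ι] (b : Module.Basis ι R M)
    {Q₁ Q₂ : QuadraticMap R M N} (h : ∀ i, Q₁ (b i) = Q₂ (b i))
    (hpolar : ∀ i j, polar Q₁ (b i) (b j) = polar Q₂ (b i) (b j)) : Q₁ = Q₂ := by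
  ext x
  rw [← Q₁.sum_repr_sq_add_sum_repr_mul_polar b, ← Q₂.sum_repr_sq_add_sum_repr_mul_polar b]
  congr 1
  · simp only [Function.comp_def, h]
  · refine Finset.sum_congr rfl fun p _ => ?_
    induction p using Sym2.ind
    simp [QuadraticMap.polarSym2_sym2Mk, hpolar]

theorem Fin.sum_univ_two_mul_eq_sum_add_rev {M : Type*} [AddCommMonoid M] {m : ℕ}
    (f : Fin (2 * m) → M) :
    ∑ i, f i =
      ∑ j : Fin m, (f (Fin.castLE (by omega) j) + f (Fin.castLE (by omega) j).rev) := by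
  rw [← (finCongr (two_mul m)).symm.sum_comp, Fin.sum_univ_add, Finset.sum_add_distrib]
  congr 1
  rw [← Equiv.sum_comp Fin.revPerm]
  refine Finset.sum_congr rfl fun j _ => congrArg f ?_
  ext; simp; omega

theorem Pi.single_comp_succAbove_self {R : Type*} [Zero R] {n : ℕ} (p : Fin (n + 1)) (c : R) :
    Pi.single p c ∘ p.succAbove = 0 :=
  funext fun i => by simp [Fin.succAbove_ne]

theorem Pi.single_succAbove_comp_succAbove {R : Type*} [Zero R] {n : ℕ} (p : Fin (n + 1))
    (j : Fin n) (c : R) : Pi.single (p.succAbove j) c ∘ p.succAbove = Pi.single j c :=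
  funext fun i => by simp [Pi.single_apply]

namespace Matrix

variable {R : Type*} [CommRing R] {n : ℕ} (p : Fin (n + 1))

def borderAt (r : Fin n → R) (B : Matrix (Fin n) (Fin n) R) :
    Matrix (Fin (n + 1)) (Fin (n + 1)) R :=
  Fin.insertNth p (Fin.insertNth p 1 r) fun i => Fin.insertNth p 0 (B i)

section borderAt

variable (r : Fin n → R) (B : Matrix (Fin n) (Fin n) R)

@[simp]
theorem borderAt_self_self : borderAt p r B p p = 1 := by simp [borderAt]

@[simp]
theorem borderAt_self_succAbove (j : Fin n) : borderAt p r B p (p.succAbove j) = r j := by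
  simp [borderAt]

@[simp]
theorem borderAt_succAbove_self (i : Fin n) : borderAt p r B (p.succAbove i) p = 0 := by
  simp [borderAt]

@[simp]
theorem borderAt_succAbove_succAbove (i j : Fin n) :
    borderAt p r B (p.succAbove i) (p.succAbove j) = B i j := by
  simp [borderAt]

@[simp]
theorem submatrix_borderAt : (borderAt p r B).submatrix p.succAbove p.succAbove = B := by
  ext; simp

end borderAt

variable {p} {A : Matrix (Fin (n + 1)) (Fin (n + 1)) R} (hA : ∀ i, A (p.succAbove i) p = 0)
include hA

theorem eq_borderAt_of_col_eq_zero (hp : A p p = 1) :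
    A = borderAt p (fun j => A p (p.succAbove j)) (A.submatrix p.succAbove p.succAbove) := by
  ext k l
  induction k using Fin.succAboveCases p <;> induction l using Fin.succAboveCases p <;>
    simp [hA, hp]

theorem mulVec_comp_succAbove_of_col_eq_zero (v : Fin (n + 1) → R) :
    (A *ᵥ v) ∘ p.succAbove = A.submatrix p.succAbove p.succAbove *ᵥ (v ∘ p.succAbove) := by
  ext i
  simp [mulVec, dotProduct, Fin.sum_univ_succAbove _ p, hA]

theorem submatrix_succAbove_mul_of_col_eq_zero (B : Matrix (Fin (n + 1)) (Fin (n + 1)) R) :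
    (A * B).submatrix p.succAbove p.succAbove =
      A.submatrix p.succAbove p.succAbove * B.submatrix p.succAbove p.succAbove := by
  ext i j
  simp [mul_apply, Fin.sum_univ_succAbove _ p, hA]

theorem det_eq_mul_det_submatrix_of_col_eq_zero :
    A.det = A p p * (A.submatrix p.succAbove p.succAbove).det := by
  rw [det_succ_column A p, Fin.sum_univ_succAbove _ p]
  simp [hA, ← two_mul, pow_mul]

end Matrix

section QuadraticForms

variable {F : Type*} [Field F] {m : ℕ}

def mid (m : ℕ) : Fin (2 * m + 1) := ⟨m, by omega⟩

theorem skipMid_eq_succAbove : skipMid m = (mid m).succAbove := by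
  funext i
  unfold skipMid
  split_ifs with h
  · rw [Fin.succAbove_of_castSucc_lt _ _ (by simp [Fin.lt_def, mid, h])]; rfl
  · rw [Fin.succAbove_of_le_castSucc _ _ (by simp [Fin.le_def, mid]; omega)]; rfl

theorem removeMid_eq_submatrix (A : Matrix (Fin (2 * m + 1)) (Fin (2 * m + 1)) F) :
    removeMid m A = A.submatrix (mid m).succAbove (mid m).succAbove := by
  ext; simp [removeMid, skipMid_eq_succAbove]

theorem Jsymp_mulVec (w : Fin (2 * m) → F) : Jsymp F m *ᵥ w = w ∘ Fin.rev := by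
  ext i
  have hrev : ∀ j : Fin (2 * m), (i : ℕ) + j = 2 * m - 1 ↔ j = i.rev := fun j => by
    rw [Fin.ext_iff, Fin.val_rev]; omega
  simp [mulVec, dotProduct, Jsymp, hrev]

theorem isUnit_Jsymp : IsUnit (Jsymp F m) :=
  mulVec_surjective_iff_isUnit.1 fun w =>
    ⟨w ∘ Fin.rev, by
      rw [Jsymp_mulVec, Function.comp_assoc, Fin.rev_involutive.comp_self]; rfl⟩

theorem eq_zero_of_forall_dotProduct_Jsymp_mulVec {y : Fin (2 * m) → F}
    (h : ∀ w, y ⬝ᵥ (Jsymp F m *ᵥ w) = 0) : y = 0 := by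
  ext i
  simpa [Jsymp_mulVec, Function.comp_assoc, Fin.rev_involutive.comp_self] using
    h (Pi.single i 1 ∘ Fin.rev)

variable (F m) in
def qsp : QuadraticForm F (Fin (2 * m) → F) :=
  ∑ j : Fin m, QuadraticMap.proj (Fin.castLE (by omega) j) (Fin.castLE (by omega) j).rev

theorem polar_qsp (w w' : Fin (2 * m) → F) :
    QuadraticMap.polar (qsp F m) w w' = w ⬝ᵥ (Jsymp F m *ᵥ w') := by
  rw [Jsymp_mulVec, dotProduct, Fin.sum_univ_two_mul_eq_sum_add_rev]
  simp only [QuadraticMap.polar, qsp, FunLike.coe_sum, Finset.sum_apply,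
    QuadraticMap.proj_apply, Pi.add_apply, Function.comp_apply, Fin.rev_rev,
    ← Finset.sum_sub_distrib]
  exact Finset.sum_congr rfl fun j _ => by ring

theorem qsp_single (j : Fin (2 * m)) (c : F) : qsp F m (Pi.single j c) = 0 := by
  simp only [qsp, FunLike.coe_sum, Finset.sum_apply, QuadraticMap.proj_apply]
  refine Finset.sum_eq_zero fun k _ => ?_
  by_cases hk : Fin.castLE (by omega) k = j
  · have hne : (Fin.castLE (by omega) k : Fin (2 * m)).rev ≠ j := by
      rw [← hk, Ne, Fin.ext_iff, Fin.val_rev]; simp; omega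
    simp [Pi.single_eq_of_ne hne]
  · simp [Pi.single_eq_of_ne hk]

variable (F m) in
def qodd : QuadraticForm F (Fin (2 * m + 1) → F) :=
  QuadraticMap.proj (mid m) (mid m) + (qsp F m).comp (LinearMap.funLeft F F (mid m).succAbove)

theorem qodd_apply (v : Fin (2 * m + 1) → F) :
    qodd F m v = v (mid m) ^ 2 + qsp F m (v ∘ (mid m).succAbove) := by
  simp [qodd, sq]; rfl

theorem coe_qodd : ⇑(qodd F m) = Qodd F m := by
  funext v
  have hlo : ∀ j : Fin m, (mid m).succAbove (Fin.castLE (by omega) j : Fin (2 * m)) =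
      Fin.castLE (by omega) j := fun j => by
    rw [Fin.succAbove_of_castSucc_lt _ _ (by simp [Fin.lt_def, mid])]; rfl
  have hhi : ∀ j : Fin m, (mid m).succAbove (Fin.castLE (by omega) j : Fin (2 * m)).rev =
      ⟨2 * m - j, by omega⟩ := fun j => by
    rw [Fin.succAbove_of_le_castSucc _ _ (by simp [Fin.le_def, mid]; omega)]; ext; simp; omega
  rw [qodd_apply, Qodd]
  simp [qsp, hlo, hhi]
  rfl

theorem qodd_single_mid (c : F) : qodd F m (Pi.single (mid m) c) = c ^ 2 := by
  simp [qodd_apply, Pi.single_comp_succAbove_self]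

theorem qodd_single_succAbove (j : Fin (2 * m)) (c : F) :
    qodd F m (Pi.single ((mid m).succAbove j) c) = 0 := by
  simp [qodd_apply, Pi.single_succAbove_comp_succAbove, qsp_single]

theorem qodd_mulVec_single (A : Matrix (Fin (2 * m + 1)) (Fin (2 * m + 1)) F)
    (k : Fin (2 * m + 1)) :
    qodd F m (A *ᵥ Pi.single k 1) =
      A (mid m) k ^ 2 + qsp F m (fun i => A ((mid m).succAbove i) k) := by
  rw [mulVec_single_one, qodd_apply]; rfl

theorem polar_qodd [CharP F 2] (u v : Fin (2 * m + 1) → F) :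
    QuadraticMap.polar (qodd F m) u v =
      (u ∘ (mid m).succAbove) ⬝ᵥ (Jsymp F m *ᵥ (v ∘ (mid m).succAbove)) := by
  rw [← polar_qsp]
  simp only [QuadraticMap.polar, qodd_apply, Pi.add_apply, Pi.add_comp, CharTwo.add_sq]
  ring

theorem polar_qodd_mulVec [CharP F 2] {A : Matrix (Fin (2 * m + 1)) (Fin (2 * m + 1)) F}
    (hA : ∀ i, A ((mid m).succAbove i) (mid m) = 0) (u v : Fin (2 * m + 1) → F) :
    QuadraticMap.polar (qodd F m) (A *ᵥ u) (A *ᵥ v) =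
      (u ∘ (mid m).succAbove) ⬝ᵥ
        (((removeMid m A)ᵀ * Jsymp F m * removeMid m A) *ᵥ (v ∘ (mid m).succAbove)) := by
  rw [polar_qodd, mulVec_comp_succAbove_of_col_eq_zero hA,
    mulVec_comp_succAbove_of_col_eq_zero hA, removeMid_eq_submatrix, ← mulVec_mulVec,
    ← mulVec_mulVec]
  simp only [dotProduct_mulVec, vecMul_transpose]

theorem polar_qodd_mulVec_of_forall {A : Matrix (Fin (2 * m + 1)) (Fin (2 * m + 1)) F}
    (hQ : ∀ v, qodd F m (A *ᵥ v) = qodd F m v) (u v : Fin (2 * m + 1) → F) :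
    QuadraticMap.polar (qodd F m) (A *ᵥ u) (A *ᵥ v) = QuadraticMap.polar (qodd F m) u v := by
  simp only [QuadraticMap.polar, ← mulVec_add, hQ]

end QuadraticForms

section CharTwoField

variable {F : Type*} [Field F] [CharP F 2] {m : ℕ}
  {A : Matrix (Fin (2 * m + 1)) (Fin (2 * m + 1)) F}

theorem col_mid_of_forall_qodd (hdet : IsUnit A.det)
    (hQ : ∀ v, qodd F m (A *ᵥ v) = qodd F m v) :
    (∀ i, A ((mid m).succAbove i) (mid m) = 0) ∧ A (mid m) (mid m) = 1 := by
  have hsurj : Function.Surjective A.mulVec :=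
    mulVec_surjective_iff_isUnit.2 ((isUnit_iff_isUnit_det A).2 hdet)
  set x := A *ᵥ Pi.single (mid m) 1 with hx
  have hx_apply : ∀ k, x k = A k (mid m) := fun k => by simp [x]
  have hrad : x ∘ (mid m).succAbove = 0 := by
    refine eq_zero_of_forall_dotProduct_Jsymp_mulVec fun w => ?_
    obtain ⟨v, rfl⟩ : ∃ v : Fin (2 * m + 1) → F, v ∘ (mid m).succAbove = w :=
      Fin.succAbove_right_injective.surjective_comp_right w
    obtain ⟨u, rfl⟩ := hsurj v
    rw [← polar_qodd, polar_qodd_mulVec_of_forall hQ, polar_qodd, Pi.single_comp_succAbove_self,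
      zero_dotProduct]
  have hmid : x (mid m) ^ 2 = 1 ^ 2 := by
    have := hQ (Pi.single (mid m) 1)
    rwa [← hx, qodd_apply, hrad, qodd_single_mid, map_zero, add_zero] at this
  exact ⟨fun i => by simpa [hx_apply] using congrFun hrad i,
    by rw [← hx_apply]; exact CharTwo.sq_injective hmid⟩

theorem removeMid_symplectic_iff (hA : ∀ i, A ((mid m).succAbove i) (mid m) = 0) :
    (removeMid m A)ᵀ * Jsymp F m * removeMid m A = Jsymp F m ↔
      ∀ u v, QuadraticMap.polar (qodd F m) (A *ᵥ u) (A *ᵥ v) =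
        QuadraticMap.polar (qodd F m) u v := by
  simp only [polar_qodd_mulVec hA, polar_qodd]
  refine ⟨fun h u v => by rw [h], fun h => ?_⟩
  ext i j
  simpa [Pi.single_succAbove_comp_succAbove, mulVec_single_one] using
    h (Pi.single ((mid m).succAbove i) 1) (Pi.single ((mid m).succAbove j) 1)

theorem sq_apply_mid_succAbove (hQ : ∀ v, qodd F m (A *ᵥ v) = qodd F m v) (j : Fin (2 * m)) :
    A (mid m) ((mid m).succAbove j) ^ 2 = qsp F m ((removeMid m A)ᵀ j) := by
  have := hQ (Pi.single ((mid m).succAbove j) 1)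
  rw [qodd_mulVec_single, qodd_single_succAbove, CharTwo.add_eq_zero] at this
  rw [this, removeMid_eq_submatrix]
  rfl

theorem det_eq_one_of_symplectic {B : Matrix (Fin (2 * m)) (Fin (2 * m)) F}
    (hB : Bᵀ * Jsymp F m * B = Jsymp F m) : B.det = 1 := by
  have h := congrArg det hB
  rw [det_mul, det_mul, det_transpose] at h
  have hJ : IsUnit (Jsymp F m).det := (isUnit_iff_isUnit_det _).1 isUnit_Jsymp
  have hsq : B.det ^ 2 * (Jsymp F m).det = 1 ^ 2 * (Jsymp F m).det := by linear_combination h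
  exact CharTwo.sq_injective (hJ.mul_right_cancel hsq)

theorem eq_of_removeMid_eq {A' : Matrix (Fin (2 * m + 1)) (Fin (2 * m + 1)) F}
    (hdet : IsUnit A.det) (hQ : ∀ v, qodd F m (A *ᵥ v) = qodd F m v)
    (hdet' : IsUnit A'.det) (hQ' : ∀ v, qodd F m (A' *ᵥ v) = qodd F m v)
    (h : removeMid m A = removeMid m A') : A = A' := by
  obtain ⟨hcol, hmid⟩ := col_mid_of_forall_qodd hdet hQ
  obtain ⟨hcol', hmid'⟩ := col_mid_of_forall_qodd hdet' hQ'
  have hrow : ∀ j, A (mid m) ((mid m).succAbove j) = A' (mid m) ((mid m).succAbove j) := fun j =>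
    CharTwo.sq_injective <| by
      simp only [sq_apply_mid_succAbove hQ, sq_apply_mid_succAbove hQ', h]
  rw [eq_borderAt_of_col_eq_zero hcol hmid, eq_borderAt_of_col_eq_zero hcol' hmid',
    ← removeMid_eq_submatrix, ← removeMid_eq_submatrix, h]
  simp only [hrow]

theorem borderAt_mem_of_symplectic {B : Matrix (Fin (2 * m)) (Fin (2 * m)) F}
    (hB : Bᵀ * Jsymp F m * B = Jsymp F m) {r : Fin (2 * m) → F}
    (hr : ∀ j, r j ^ 2 = qsp F m (Bᵀ j)) :
    (borderAt (mid m) r B).det = 1 ∧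
      ∀ v, qodd F m (borderAt (mid m) r B *ᵥ v) = qodd F m v := by
  have hcol := borderAt_succAbove_self (mid m) r B
  have hR : removeMid m (borderAt (mid m) r B) = B := by
    rw [removeMid_eq_submatrix, submatrix_borderAt]
  have hpolar := (removeMid_symplectic_iff hcol).1 (by rwa [hR])
  refine ⟨?_, fun v => ?_⟩
  · rw [det_eq_mul_det_submatrix_of_col_eq_zero hcol, ← removeMid_eq_submatrix, hR,
      borderAt_self_self, one_mul, det_eq_one_of_symplectic hB]
  have key : (qodd F m).comp (toLin' (borderAt (mid m) r B)) = qodd F m := by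
    refine QuadraticMap.ext_basis (Pi.basisFun F _) (fun k => ?_) fun k l => by
      simpa only [QuadraticMap.polar, QuadraticMap.comp_apply, toLin'_apply, mulVec_add] using
        hpolar (Pi.basisFun F _ k) (Pi.basisFun F _ l)
    simp only [QuadraticMap.comp_apply, toLin'_apply, Pi.basisFun_apply, qodd_mulVec_single]
    cases k using Fin.succAboveCases (mid m) with
    | x => simp [qodd_single_mid, ← Pi.zero_def]
    | p j =>
      simp only [borderAt_self_succAbove, borderAt_succAbove_succAbove, hr, qodd_single_succAbove]
      exact CharTwo.add_self_eq_zero _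
  simpa using DFunLike.congr_fun key v

end CharTwoField

theorem removeMid_iso_SO_Sp_general (F : Type*) [Field F] [Fintype F]
    (hq : Even (Fintype.card F)) (m : ℕ) :
    Set.BijOn (removeMid m)
      {A : Matrix (Fin (2 * m + 1)) (Fin (2 * m + 1)) F |
        A.det = 1 ∧ ∀ v, Qodd F m (A *ᵥ v) = Qodd F m v}
      {B : Matrix (Fin (2 * m)) (Fin (2 * m)) F | Bᵀ * Jsymp F m * B = Jsymp F m} ∧
    ∀ A B : Matrix (Fin (2 * m + 1)) (Fin (2 * m + 1)) F,
      (A.det = 1 ∧ ∀ v, Qodd F m (A *ᵥ v) = Qodd F m v) →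
      (B.det = 1 ∧ ∀ v, Qodd F m (B *ᵥ v) = Qodd F m v) →
      removeMid m (A * B) = removeMid m A * removeMid m B := by
  have : CharP F 2 := ringChar.of_eq (FiniteField.even_card_iff_char_two.2 (Nat.even_iff.1 hq))
  simp only [← coe_qodd]
  have hcol {A : Matrix (Fin (2 * m + 1)) (Fin (2 * m + 1)) F}
      (hA : A.det = 1 ∧ ∀ v, qodd F m (A *ᵥ v) = qodd F m v) :=
    col_mid_of_forall_qodd (hA.1 ▸ isUnit_one) hA.2
  refine ⟨⟨fun A hA => ?_, fun A hA A' hA' h => ?_, fun B hB => ?_⟩, fun A B hA _ => ?_⟩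
  · exact (removeMid_symplectic_iff (hcol hA).1).2 (polar_qodd_mulVec_of_forall hA.2)
  · exact eq_of_removeMid_eq (hA.1 ▸ isUnit_one) hA.2 (hA'.1 ▸ isUnit_one) hA'.2 h
  · choose r hr using fun j => surjective_frobenius F 2 (qsp F m (Bᵀ j))
    exact ⟨borderAt (mid m) r B, borderAt_mem_of_symplectic hB hr,
      by rw [removeMid_eq_submatrix, submatrix_borderAt]⟩
  · simp only [removeMid_eq_submatrix]
    exact submatrix_succAbove_mul_of_col_eq_zero (hcol hA).1 B

/-- For even `q`, removing the middle row and column is a group isomorphism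
`SO_{2m+1}(q) → Sp_{2m}(q)`: it is a multiplication-preserving bijection from
`{A : det A = 1, Q_{2m+1}(Av) = Q_{2m+1}(v)}` onto `{B : Bᵀ J_{2m} B = J_{2m}}`. -/
theorem removeMid_iso_SO_Sp (F : Type*) [Field F] [Fintype F]
    (hq : Even (Fintype.card F)) (m : ℕ) (hm : 1 ≤ m) :
    Set.BijOn (removeMid m)
      {A : Matrix (Fin (2 * m + 1)) (Fin (2 * m + 1)) F |
        A.det = 1 ∧ ∀ v, Qodd F m (A *ᵥ v) = Qodd F m v}
      {B : Matrix (Fin (2 * m)) (Fin (2 * m)) F | Bᵀ * Jsymp F m * B = Jsymp F m} ∧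
    ∀ A B : Matrix (Fin (2 * m + 1)) (Fin (2 * m + 1)) F,
      (A.det = 1 ∧ ∀ v, Qodd F m (A *ᵥ v) = Qodd F m v) →
      (B.det = 1 ∧ ∀ v, Qodd F m (B *ᵥ v) = Qodd F m v) →
      removeMid m (A * B) = removeMid m A * removeMid m B :=
  removeMid_iso_SO_Sp_general F hq m
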